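/- Let G be a group and M a crossed module over the group algebra kG, i.e. a kG-module with a decomposition M = ⊕_{x∈G} M_x such that g·M_x ⊆ M_{gxg^{-1}} for all g,x ∈ G. Then M ≅ ⊕_{g∈t(G)} M_{[g]} as crossed modules, where M_{[g]} = ⊕_{x∈[g]} M_x, and for each g ∈ t(G) there is an isomorphism of crossed modules M_{[g]} ≅ Ind_{kG_g}^{kG} M_g = kG ⊗_{kG_g} M_g, where G_g is the centralizer of g in G. Moreover, M is modular if and only if g·m = m for every g ∈ G and every m ∈ M_g. -/

import Mathlib

/-!
STATEMENT 8: Let G be a group and M a crossed module over the group algebra kG, i.e. a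
kG-module with a decomposition M = ⊕_{x∈G} M_x such that g·M_x ⊆ M_{gxg⁻¹}.  Then M decomposes
as the direct sum, over conjugacy classes, of the crossed submodules M_{[g]} = ⊕_{x∈[g]} M_x,
and M_{[g]} ≅ Ind_{kG_g}^{kG} M_g = kG ⊗_{kG_g} M_g (an isomorphism of crossed modules), where
G_g is the centralizer of g.  Moreover M is modular iff g·m = m for all g and m ∈ M_g.
-/

noncomputable section
open Finsupp Submodule
open scoped DirectSum

variable (k : Type) [Field k]

abbrev FreeMod (X : Type) : Type := X →₀ k
def fgen {X : Type} (x : X) : FreeMod k X := Finsupp.single x 1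

variable (G : Type) [Group G] [DecidableEq G] [DecidableEq (ConjClasses G)]
variable (M : Type) [AddCommGroup M] [Module k M]
variable [DistribMulAction G M] [SMulCommClass G k M]
variable (D : G → Submodule k M)

/-- The crossed-module condition `g · M_x ⊆ M_{g x g⁻¹}`. -/
def IsCrossedDecomp : Prop :=
  DirectSum.IsInternal D ∧ ∀ (g x : G), ∀ m ∈ D x, g • m ∈ D (g * x * g⁻¹)

/-- `M_{[g]} = ⊕_{x ∈ [g]} M_x`, the component of a conjugacy class. -/
def Mclass (c : ConjClasses G) : Submodule k M :=
  ⨆ (x : G) (_ : ConjClasses.mk x = c), D x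

/-- Modularity of the crossed module: for every decomposition of `m` into homogeneous
components `m = Σ_x m_x` one has `Σ_x x • m_x = m`. -/
def IsModularDecomp : Prop :=
  ∀ (s : Finset G) (comp : G → M), (∀ x ∈ s, comp x ∈ D x) →
    ∑ x ∈ s, x • comp x = ∑ x ∈ s, comp x

/-- Relations presenting the induced module `kG ⊗_{kG_g} M_g`. -/
def indGRels (g : G) : Set (FreeMod k (G × ↥(D g))) :=
  { z | (∃ (x : G) (m m' : ↥(D g)),
          z = fgen k (x, m + m') - fgen k (x, m) - fgen k (x, m')) ∨
        (∃ (x : G) (c : k) (m : ↥(D g)),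
          z = fgen k (x, c • m) - c • fgen k (x, m)) ∨
        (∃ (x h : G) (_ : h ∈ Subgroup.centralizer ({g} : Set G)) (m m' : ↥(D g)),
          (m' : M) = h • (m : M) ∧ z = fgen k (x * h, m) - fgen k (x, m')) }

/-- The induced module `Ind_{kG_g}^{kG} M_g = kG ⊗_{kG_g} M_g`. -/
abbrev IndG (g : G) : Type :=
  FreeMod k (G × ↥(D g)) ⧸ Submodule.span k (indGRels k G M D g)

/-- The pure tensor `x ⊗ m` in `Ind_{kG_g}^{kG} M_g`. -/
def indGen (g : G) (x : G) (m : ↥(D g)) : IndG k G M D g :=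
  Submodule.Quotient.mk (fgen k (x, m))

/-!
Every `g` maps `M_x` into `M_{gxg⁻¹}`, so grouping the homogeneous components by conjugacy class
splits `M` into `G`-stable pieces. On the piece of the class of `g`, the map `x ⊗ m ↦ x • m` out
of the induced module has a componentwise inverse: `m ∈ M_y` with `y = s g s⁻¹` goes to
`s ⊗ s⁻¹ • m`. This is independent of the choice of `s`, since two choices differ by an element
of the centralizer `G_g`, which moves across the tensor sign. Modularity, tested on a single
homogeneous component, is exactly the condition `g • m = m` on `M_g`.
-/

section Fibers

variable {ι κ : Type*}

theorem iSup_iSup_fiber {α : Type*} [CompleteLattice α] (t : ι → α) (f : ι → κ) :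
    ⨆ (c) (i) (_ : f i = c), t i = ⨆ i, t i := by
  rw [iSup_comm]
  simp_rw [iSup_iSup_eq_right]

theorem iSupIndep.iSup_fiber {α : Type*} [CompleteLattice α] [IsModularLattice α]
    [IsCompactlyGenerated α] {t : ι → α} (ht : iSupIndep t) (f : ι → κ) :
    iSupIndep fun c => ⨆ (i) (_ : f i = c), t i := by
  intro c
  have hrest : ⨆ (c') (_ : c' ≠ c), ⨆ (i) (_ : f i = c'), t i = ⨆ i ∈ {i | f i ≠ c}, t i := by
    apply le_antisymm
    · exact iSup₂_le fun c' hc' => iSup₂_le fun i hi => le_biSup t (show f i ≠ c from hi ▸ hc')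
    · exact iSup₂_le fun i hi => le_iSup₂_of_le (f i) hi (le_iSup₂_of_le i rfl le_rfl)
  rw [hrest]
  exact ht.disjoint_biSup_biSup (s := {i | f i = c}) (Set.disjoint_left.2 fun _ h h' => h' h)

theorem DirectSum.IsInternal.iSup_fiber {R N : Type*} [Ring R] [AddCommGroup N] [Module R N]
    [DecidableEq ι] [DecidableEq κ] {A : ι → Submodule R N} (h : IsInternal A) (f : ι → κ) :
    IsInternal fun c => ⨆ (i) (_ : f i = c), A i :=
  (isInternal_submodule_iff_iSupIndep_and_iSup_eq_top _).2
    ⟨h.submodule_iSupIndep.iSup_fiber f, (iSup_iSup_fiber A f).trans h.submodule_iSup_eq_top⟩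

end Fibers

section CrossedModule

variable {k : Type} [Field k] {G : Type} [Group G] {M : Type} [AddCommGroup M] [Module k M]
  {D : G → Submodule k M}

theorem le_mclass (x : G) : D x ≤ Mclass k G M D (ConjClasses.mk x) :=
  le_iSup₂_of_le x rfl le_rfl

variable [DistribMulAction G M]

theorem isModularDecomp_iff : IsModularDecomp k G M D ↔ ∀ g : G, ∀ m ∈ D g, g • m = m := by
  refine ⟨fun hmod g m hm => ?_, fun hfix s comp hcomp => Finset.sum_congr rfl fun x hx =>
    hfix x _ (hcomp x hx)⟩
  simpa using hmod {g} (fun _ => m) (by simpa using hm)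

theorem indGen_mul_of_mem_centralizer {g h : G} (hh : h ∈ Subgroup.centralizer {g}) (x : G)
    {m m' : D g} (hm' : (m' : M) = h • (m : M)) :
    indGen k G M D g (x * h) m = indGen k G M D g x m' :=
  (Submodule.Quotient.eq _).2 (subset_span (Or.inr (Or.inr ⟨x, h, hh, m, m', hm', rfl⟩)))

def indGenLinear (D : G → Submodule k M) (g x : G) : D g →ₗ[k] IndG k G M D g where
  toFun := indGen k G M D g x
  map_add' m m' :=
    (Submodule.Quotient.eq _).2 (subset_span (Or.inl ⟨x, m, m', (sub_sub _ _ _).symm⟩))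
  map_smul' c m := (Submodule.Quotient.eq _).2 (subset_span (Or.inr (Or.inl ⟨x, c, m, rfl⟩)))

namespace IsCrossedDecomp

variable [DecidableEq G]

theorem smul_mem_mclass_of_mem (hcm : IsCrossedDecomp k G M D) (g : G) {x : G} {m : M}
    (hm : m ∈ D x) : g • m ∈ Mclass k G M D (ConjClasses.mk x) := by
  have hconj : ConjClasses.mk (g * x * g⁻¹) = ConjClasses.mk x :=
    (ConjClasses.mk_eq_mk_iff_isConj.2 (isConj_iff.2 ⟨g, rfl⟩)).symm
  simpa only [hconj] using le_mclass _ (hcm.2 g x m hm)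

theorem inv_smul_mem_of_conj (hcm : IsCrossedDecomp k G M D) {g x s : G}
    (hs : s * g * s⁻¹ = x) {m : M} (hm : m ∈ D x) : s⁻¹ • m ∈ D g := by
  subst hs
  simpa [mul_assoc] using hcm.2 s⁻¹ _ m hm

theorem indGen_inv_smul_eq (hcm : IsCrossedDecomp k G M D) {g x s t : G}
    (hs : s * g * s⁻¹ = x) (ht : t * g * t⁻¹ = x) {m : M} (hm : m ∈ D x) :
    indGen k G M D g t ⟨t⁻¹ • m, hcm.inv_smul_mem_of_conj ht hm⟩ =
      indGen k G M D g s ⟨s⁻¹ • m, hcm.inv_smul_mem_of_conj hs hm⟩ := by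
  have hcent : s⁻¹ * t ∈ Subgroup.centralizer {g} := by
    rw [Subgroup.mem_centralizer_singleton_iff]
    calc s⁻¹ * t * g = s⁻¹ * (t * g * t⁻¹) * t := by group
      _ = s⁻¹ * (s * g * s⁻¹) * t := by rw [ht, hs]
      _ = g * (s⁻¹ * t) := by group
  simpa using indGen_mul_of_mem_centralizer hcent s (m' := ⟨s⁻¹ • m, _⟩)
    (by simp [mul_smul])

end IsCrossedDecomp

variable [SMulCommClass G k M]

def indSmulMap (D : G → Submodule k M) (g : G) : IndG k G M D g →ₗ[k] M :=
  (span k (indGRels k G M D g)).liftQ (linearCombination k fun p => p.1 • (p.2 : M)) <| by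
    rw [span_le]
    rintro z (⟨x, m, m', rfl⟩ | ⟨x, c, m, rfl⟩ | ⟨x, h, -, m, m', hm', rfl⟩)
    · simp [fgen, smul_add]
    · simp [fgen, smul_comm]
    · simp [fgen, hm', mul_smul]

@[simp]
theorem indSmulMap_indGen (g x : G) (m : D g) :
    indSmulMap D g (indGen k G M D g x m) = x • (m : M) := by
  simp [indSmulMap, indGen, fgen]

namespace IsCrossedDecomp

variable [DecidableEq G]

theorem smul_mem_mclass (hcm : IsCrossedDecomp k G M D) (g : G) {c : ConjClasses G} {m : M}
    (hm : m ∈ Mclass k G M D c) : g • m ∈ Mclass k G M D c := by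
  suffices Mclass k G M D c ≤ (Mclass k G M D c).comap (DistribSMul.toLinearMap k M g) from
    this hm
  refine iSup₂_le fun x hx => ?_
  intro y hy
  subst hx
  exact hcm.smul_mem_mclass_of_mem g hy

theorem range_indSmulMap_le (hcm : IsCrossedDecomp k G M D) (g : G) :
    LinearMap.range (indSmulMap D g) ≤ Mclass k G M D (ConjClasses.mk g) := by
  rw [indSmulMap, range_liftQ, range_linearCombination, span_le, Set.range_subset_iff]
  exact fun p => hcm.smul_mem_mclass_of_mem p.1 p.2.2

open Classical in
def indGenOfConj (hcm : IsCrossedDecomp k G M D) (g x : G) : D x →ₗ[k] IndG k G M D g :=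
  if h : IsConj g x then
    indGenLinear D g (isConj_iff.1 h).choose ∘ₗ
      (DistribSMul.toLinearMap k M (isConj_iff.1 h).choose⁻¹).restrict
        fun _ hm => hcm.inv_smul_mem_of_conj (isConj_iff.1 h).choose_spec hm
  else 0

def indInv (hcm : IsCrossedDecomp k G M D) (g : G) : M →ₗ[k] IndG k G M D g :=
  DirectSum.toModule k G _ (hcm.indGenOfConj g) ∘ₗ
    (LinearEquiv.ofBijective (DirectSum.coeLinearMap D) hcm.1).symm.toLinearMap

theorem indInv_of_mem (hcm : IsCrossedDecomp k G M D) {g x s : G} (hs : s * g * s⁻¹ = x)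
    {m : M} (hm : m ∈ D x) :
    hcm.indInv g m = indGen k G M D g s ⟨s⁻¹ • m, hcm.inv_smul_mem_of_conj hs hm⟩ := by
  have hdec : (LinearEquiv.ofBijective (DirectSum.coeLinearMap D) hcm.1).symm m =
      DirectSum.lof k G (fun x => D x) x ⟨m, hm⟩ :=
    (LinearEquiv.symm_apply_eq _).2 (DirectSum.coeLinearMap_of D x ⟨m, hm⟩).symm
  have hconj : IsConj g x := isConj_iff.2 ⟨s, hs⟩
  rw [indInv, LinearMap.comp_apply, LinearEquiv.coe_coe, hdec, DirectSum.toModule_lof,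
    indGenOfConj, dif_pos hconj]
  exact hcm.indGen_inv_smul_eq hs (isConj_iff.1 hconj).choose_spec hm

theorem indInv_smul (hcm : IsCrossedDecomp k G M D) (g x : G) (m : D g) :
    hcm.indInv g (x • (m : M)) = indGen k G M D g x m := by
  rw [hcm.indInv_of_mem rfl (hcm.2 x g m m.2)]
  simp

theorem indSmulMap_indInv (hcm : IsCrossedDecomp k G M D) {g : G} {m : M}
    (hm : m ∈ Mclass k G M D (ConjClasses.mk g)) : indSmulMap D g (hcm.indInv g m) = m := by
  suffices Mclass k G M D (ConjClasses.mk g) ≤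
      LinearMap.eqLocus (indSmulMap D g ∘ₗ hcm.indInv g) LinearMap.id from this hm
  refine iSup₂_le fun x hx => ?_
  intro y hy
  obtain ⟨s, hs⟩ := isConj_iff.1 (ConjClasses.mk_eq_mk_iff_isConj.1 hx.symm)
  simp [hcm.indInv_of_mem hs hy]

def indEquiv (hcm : IsCrossedDecomp k G M D) (g : G) :
    IndG k G M D g ≃ₗ[k] Mclass k G M D (ConjClasses.mk g) :=
  LinearEquiv.ofLinearMap
    ((indSmulMap D g).codRestrict _ fun q => hcm.range_indSmulMap_le g ⟨q, rfl⟩)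
    (hcm.indInv g ∘ₗ (Mclass k G M D (ConjClasses.mk g)).subtype)
    (by ext ⟨m, hm⟩; exact hcm.indSmulMap_indInv hm)
    (by
      ext ⟨x, m⟩
      change hcm.indInv g (indSmulMap D g (indGen k G M D g x m)) = indGen k G M D g x m
      rw [indSmulMap_indGen, indInv_smul])

@[simp]
theorem indEquiv_indGen (hcm : IsCrossedDecomp k G M D) (g x : G) (m : D g) :
    (hcm.indEquiv g (indGen k G M D g x m) : M) = x • (m : M) :=
  indSmulMap_indGen g x m

end IsCrossedDecomp

end CrossedModule

/-- STATEMENT 8. -/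
theorem crossed_module_over_group_algebra_decomposition
    (hcm : IsCrossedDecomp k G M D) :
    -- (a) M is the direct sum of the crossed submodules M_{[g]}, indexed by conjugacy classes
    DirectSum.IsInternal (fun c : ConjClasses G => Mclass k G M D c) ∧
    (∀ (c : ConjClasses G) (g : G), ∀ m ∈ Mclass k G M D c, g • m ∈ Mclass k G M D c) ∧
    -- (b) M_{[g]} ≅ Ind_{kG_g}^{kG} M_g as crossed modules
    (∀ g : G, ∃ e : IndG k G M D g ≃ₗ[k] ↥(Mclass k G M D (ConjClasses.mk g)),
      (∀ (y x : G) (m : ↥(D g)),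
        (e (indGen k G M D g (y * x) m) : M) = y • (e (indGen k G M D g x m) : M)) ∧
      (∀ (x : G) (m : ↥(D g)),
        (e (indGen k G M D g x m) : M) ∈ D (x * g * x⁻¹))) ∧
    -- (c) M is modular iff every g acts as the identity on M_g
    (IsModularDecomp k G M D ↔ ∀ g : G, ∀ m ∈ D g, g • m = m) := by
  refine ⟨hcm.1.iSup_fiber ConjClasses.mk, fun c g m hm => hcm.smul_mem_mclass g hm,
    fun g => ⟨hcm.indEquiv g, fun y x m => ?_, fun x m => ?_⟩, isModularDecomp_iff⟩
  · simp only [IsCrossedDecomp.indEquiv_indGen, mul_smul]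
  · simpa using hcm.2 x g m m.2

end
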